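/- arXiv:2306.16521 — 3 statements merged into one kernel-verified Lean document; each statement's English description precedes it below -/
import Mathlib

section
/- Let $\theta_1 \geq \theta_2 \geq \cdots \geq \theta_n > 0$ with $\sum_i \theta_i = 1$, and let $\pi(\sigma) = \prod_{j=1}^n \frac{\theta_{\sigma(j)}}{1 - \theta_{\sigma(1)} - \cdots - \theta_{\sigma(j-1)}}$ be the Luce measure on $S_n$. If $\sigma'$ covers $\sigma$ in the weak Bruhat order, i.e., $\sigma$ is obtained from $\sigma'$ by swapping positions $i$ and $i+1$ where $\sigma'(i) < \sigma'(i+1)$, then $\pi(\sigma) < \pi(\sigma')$ whenever $\theta_{\sigma'(i)} > \theta_{\sigma'(i+1)}$, and $\pi(\sigma) \leq \pi(\sigma')$ always. -/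
open Finset

/-- monotonicity of the Luce measure along weak Bruhat covers.
If `σ` is obtained from `σ'` by swapping positions `i` and `i+1` where
`σ'(i) < σ'(i+1)`, then `π σ ≤ π σ'`, strictly when `θ (σ' i) > θ (σ' (i+1))`. -/
theorem luce_monotone_weak_bruhat (n : ℕ) (θ : Fin n → ℝ)
    (hpos : ∀ i, 0 < θ i) (hsum : ∑ i : Fin n, θ i = 1) (hdec : Antitone θ)
    (π : Equiv.Perm (Fin n) → ℝ)
    (hπ : ∀ τ : Equiv.Perm (Fin n),
      π τ = ∏ k : Fin n, θ (τ k) / (1 - ∑ l : Fin n, if l < k then θ (τ l) else 0))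
    (σ' : Equiv.Perm (Fin n)) (i j : Fin n) (hij : (i : ℕ) + 1 = (j : ℕ))
    (hcover : σ' i < σ' j)
    (σ : Equiv.Perm (Fin n)) (hσ : σ = (Equiv.swap i j).trans σ') :
    π σ ≤ π σ' ∧ (θ (σ' j) < θ (σ' i) → π σ < π σ') := by
  have hijlt : i < j := by rw [Fin.lt_def]; omega
  have hσi : σ i = σ' j := by rw [hσ]; simp
  have hσj : σ j = σ' i := by rw [hσ]; simp
  have hσo : ∀ l, l ≠ i → l ≠ j → σ l = σ' l := by
    intro l h1 h2; rw [hσ]; simp [Equiv.swap_apply_of_ne_of_ne h1 h2]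
  set g : Equiv.Perm (Fin n) → Fin n → ℝ :=
    fun τ k => ∑ l : Fin n, if l < k then θ (τ l) else 0 with hg
  have htot : ∀ τ : Equiv.Perm (Fin n), ∑ l : Fin n, θ (τ l) = 1 := by
    intro τ; rw [Equiv.sum_comp τ θ]; exact hsum
  -- positivity of denominators
  have hden : ∀ (τ : Equiv.Perm (Fin n)) (k : Fin n), 0 < 1 - g τ k := by
    intro τ k
    have h1 : g τ k + ∑ l : Fin n, (if l < k then 0 else θ (τ l)) = 1 := by
      rw [hg, ← Finset.sum_add_distrib, ← htot τ]
      refine Finset.sum_congr rfl fun l _ => ?_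
      split <;> ring
    have h2 : 0 < ∑ l : Fin n, (if l < k then 0 else θ (τ l)) := by
      apply Finset.sum_pos'
      · intro l _; split
        · exact le_refl 0
        · exact (hpos _).le
      · exact ⟨k, Finset.mem_univ k, by simp [hpos]⟩
    linarith
  have hlt_j : ∀ l : Fin n, l < j ↔ l < i ∨ l = i := by
    intro l
    rw [Fin.lt_def, Fin.lt_def, Fin.ext_iff]
    omega
  -- decomposition of g at j
  have hgj : ∀ τ : Equiv.Perm (Fin n), g τ j = g τ i + θ (τ i) := by
    intro τ
    have hterm : ∀ l : Fin n, (if l < j then θ (τ l) else 0)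
        = (if l < i then θ (τ l) else 0) + (if l = i then θ (τ l) else 0) := by
      intro l
      by_cases h : l < j
      · rcases (hlt_j l).mp h with h1 | h1
        · simp [h, h1, (ne_of_lt h1)]
        · subst h1; simp [h, lt_irrefl]
      · have h1 : ¬ l < i := fun hc => h ((hlt_j l).mpr (Or.inl hc))
        have h2 : l ≠ i := fun hc => h ((hlt_j l).mpr (Or.inr hc))
        simp [h, h1, h2]
    rw [hg]
    simp only [hterm]
    rw [Finset.sum_add_distrib, Finset.sum_ite_eq' Finset.univ i (fun l => θ (τ l))]
    simp
  -- equality of partial sums away from j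
  have hgeq : ∀ k : Fin n, k ≠ j → g σ k = g σ' k := by
    intro k hk
    rcases lt_or_ge i k with hik | hik
    · -- then j < k (since k ≠ j and nothing between i and j)
      have hjk : j < k := by
        rw [Fin.lt_def] at hik ⊢
        have := (Fin.ext_iff (a := k) (b := j)).not.mp hk
        omega
      have key := Fintype.sum_equiv (Equiv.swap i j)
        (fun l => if l < k then θ (σ l) else 0)
        (fun l => if Equiv.swap i j l < k then θ (σ' l) else 0)
        (by intro x; simp [hσ, Equiv.swap_apply_self])
      rw [hg]
      simp only []
      rw [key]
      refine Finset.sum_congr rfl fun l _ => ?_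
      by_cases h1 : l = i
      · subst h1; simp [Equiv.swap_apply_left, hjk, (hijlt.trans hjk)]
      · by_cases h2 : l = j
        · subst h2; simp [Equiv.swap_apply_right, hjk, (hijlt.trans hjk)]
        · simp only [Equiv.swap_apply_of_ne_of_ne h1 h2]
    · -- k ≤ i : all indices l < k are fixed by the swap
      rw [hg]
      refine Finset.sum_congr rfl fun l _ => ?_
      by_cases h : l < k
      · have h1 : l ≠ i := fun hc => absurd (hc ▸ h) (not_lt.mpr hik)
        have h2 : l ≠ j := fun hc => absurd (hc ▸ h)
          (not_lt.mpr (hik.trans hijlt.le))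
        simp [h, hσo l h1 h2]
      · simp [h]
  have hgi : g σ i = g σ' i := hgeq i (ne_of_lt hijlt)
  -- compare the partial sums at j
  have hcmp : g σ' j - g σ j = θ (σ' i) - θ (σ' j) := by
    rw [hgj σ, hgj σ', hgi, hσi]; ring
  have hθle : θ (σ' j) ≤ θ (σ' i) := hdec hcover.le
  -- rewrite π as a quotient
  have hπ' : ∀ τ : Equiv.Perm (Fin n),
      π τ = (∏ m : Fin n, θ m) / ∏ k : Fin n, (1 - g τ k) := by
    intro τ
    rw [hπ τ, Finset.prod_div_distrib, Equiv.prod_comp τ θ]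
  have hN : 0 < ∏ m : Fin n, θ m := Finset.prod_pos fun m _ => hpos m
  have hPsplit : ∀ τ : Equiv.Perm (Fin n),
      ∏ k : Fin n, (1 - g τ k)
        = (1 - g τ j) * ∏ k ∈ Finset.univ.erase j, (1 - g τ k) :=
    fun τ => (Finset.mul_prod_erase _ _ (Finset.mem_univ j)).symm
  have hCeq : ∏ k ∈ Finset.univ.erase j, (1 - g σ k)
      = ∏ k ∈ Finset.univ.erase j, (1 - g σ' k) :=
    Finset.prod_congr rfl fun k hk => by rw [hgeq k (Finset.ne_of_mem_erase hk)]
  have hC : 0 < ∏ k ∈ Finset.univ.erase j, (1 - g σ' k) :=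
    Finset.prod_pos fun k _ => hden σ' k
  have hdj : 0 < 1 - g σ j := hden σ j
  have hdj' : 0 < 1 - g σ' j := hden σ' j
  have hπσ : π σ = (∏ m : Fin n, θ m)
      / ((1 - g σ j) * ∏ k ∈ Finset.univ.erase j, (1 - g σ' k)) := by
    rw [hπ' σ, hPsplit σ, hCeq]
  have hπσ' : π σ' = (∏ m : Fin n, θ m)
      / ((1 - g σ' j) * ∏ k ∈ Finset.univ.erase j, (1 - g σ' k)) := by
    rw [hπ' σ', hPsplit σ']
  constructor
  · rw [hπσ, hπσ']
    have hle : 1 - g σ' j ≤ 1 - g σ j := by linarith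
    gcongr
  · intro hstrict
    rw [hπσ, hπσ']
    have hlt : 1 - g σ' j < 1 - g σ j := by linarith
    exact div_lt_div_of_pos_left hN (mul_pos hdj' hC)
      (mul_lt_mul_of_pos_right hlt hC)
end

section
/- Let $P$ be the Luce top-$k$ distribution and $Q$ the i.i.d. product distribution on $\{1,\dots,n\}^k$ as above (with $P$ supported on distinct tuples). Then the total variation distance satisfies $\|P-Q\|_{TV} = 1 - Q(\{(a_1,\dots,a_k): a_1,\dots,a_k \text{ all distinct}\})$, equivalently $\|P-Q\|_{TV} = 1 - k!\,e_k(\theta_1,\dots,\theta_n)$. -/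
open Finset

/-- Luce probabilities over a set `s` sum to one. -/
lemma luce_sum {n : ℕ} (θ : Fin n → ℝ) (hpos : ∀ i, 0 < θ i) :
    ∀ (k : ℕ) (s : Finset (Fin n)), k ≤ s.card →
      ∑ a : Fin k → Fin n, (if Function.Injective a ∧ ∀ j, a j ∈ s then
        ∏ j : Fin k, θ (a j) / ((∑ i ∈ s, θ i) - ∑ l : Fin k, if l < j then θ (a l) else 0)
        else 0) = 1 := by
  intro k
  induction k with
  | zero =>
      intro s _
      simp [Function.injective_of_subsingleton]
  | succ k ih =>
      intro s hcard
      have hs : s.Nonempty := Finset.card_pos.mp (lt_of_lt_of_le (Nat.succ_pos k) hcard)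
      have hT : 0 < ∑ i ∈ s, θ i := Finset.sum_pos (fun i _ => hpos i) hs
      set T := ∑ i ∈ s, θ i with hTdef
      rw [← Equiv.sum_comp (Fin.consEquiv (fun _ : Fin (k+1) => Fin n)), Fintype.sum_prod_type]
      have key : ∀ i : Fin n, ∑ b : Fin k → Fin n,
          (if Function.Injective (Fin.cons i b : Fin (k+1) → Fin n) ∧
              (∀ j, (Fin.cons i b : Fin (k+1) → Fin n) j ∈ s) then
            ∏ j : Fin (k+1), θ ((Fin.cons i b : Fin (k+1) → Fin n) j) /
              (T - ∑ l : Fin (k+1), if l < j then θ ((Fin.cons i b : Fin (k+1) → Fin n) l) else 0)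
            else 0)
          = if i ∈ s then θ i / T else 0 := by
        intro i
        by_cases hi : i ∈ s
        · rw [if_pos hi]
          have herase : k ≤ (s.erase i).card := by
            rw [Finset.card_erase_of_mem hi]; omega
          have hTe : ∑ x ∈ s.erase i, θ x = T - θ i := Finset.sum_erase_eq_sub hi
          calc ∑ b : Fin k → Fin n, (if Function.Injective (Fin.cons i b : Fin (k+1) → Fin n) ∧
              (∀ j, (Fin.cons i b : Fin (k+1) → Fin n) j ∈ s) then
            ∏ j : Fin (k+1), θ ((Fin.cons i b : Fin (k+1) → Fin n) j) /
              (T - ∑ l : Fin (k+1), if l < j then θ ((Fin.cons i b : Fin (k+1) → Fin n) l) else 0)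
            else 0)
              = ∑ b : Fin k → Fin n, (θ i / T) *
                (if Function.Injective b ∧ ∀ j, b j ∈ s.erase i then
                  ∏ j : Fin k, θ (b j) /
                    ((∑ x ∈ s.erase i, θ x) - ∑ l : Fin k, if l < j then θ (b l) else 0)
                  else 0) := by
                refine Finset.sum_congr rfl fun b _ => ?_
                have hcond : (Function.Injective (Fin.cons i b : Fin (k+1) → Fin n) ∧
                    (∀ j, (Fin.cons i b : Fin (k+1) → Fin n) j ∈ s)) ↔
                    (Function.Injective b ∧ ∀ j, b j ∈ s.erase i) := by
                  rw [Fin.cons_injective_iff, Fin.forall_fin_succ]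
                  simp only [Fin.cons_zero, Fin.cons_succ, Finset.mem_erase]
                  constructor
                  · rintro ⟨⟨hr, hinj⟩, _, hmem⟩
                    exact ⟨hinj, fun j => ⟨fun h => hr ⟨j, h⟩, hmem j⟩⟩
                  · rintro ⟨hinj, hmem⟩
                    exact ⟨⟨fun ⟨j, hj⟩ => (hmem j).1 hj, hinj⟩, hi, fun j => (hmem j).2⟩
                simp only [hcond]
                by_cases hb : Function.Injective b ∧ ∀ j, b j ∈ s.erase i
                · rw [if_pos hb, if_pos hb, Fin.prod_univ_succ]
                  congr 1
                  · simp [Fin.not_lt_zero]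
                  · refine Finset.prod_congr rfl fun j _ => ?_
                    have : ∑ l : Fin (k+1), (if l < j.succ then θ ((Fin.cons i b : Fin (k+1) → Fin n) l) else 0)
                        = θ i + ∑ l : Fin k, if l < j then θ (b l) else 0 := by
                      rw [Fin.sum_univ_succ]
                      simp [Fin.succ_pos, Fin.succ_lt_succ_iff]
                    rw [this, hTe]
                    rw [Fin.cons_succ]; ring
                · rw [if_neg hb, if_neg hb, mul_zero]
          _ = θ i / T := by
                rw [← Finset.mul_sum, ih (s.erase i) herase, mul_one]
        · rw [if_neg hi]
          refine Finset.sum_eq_zero fun b _ => ?_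
          rw [if_neg]
          rintro ⟨-, hmem⟩
          exact hi (by simpa using hmem 0)
      calc ∑ i : Fin n, ∑ b : Fin k → Fin n, _ = ∑ i : Fin n, if i ∈ s then θ i / T else 0 :=
            Finset.sum_congr rfl fun i _ => key i
        _ = ∑ i ∈ s, θ i / T := by rw [Finset.sum_ite_mem, Finset.univ_inter]
        _ = 1 := by rw [← Finset.sum_div, div_self hT.ne']

lemma erase_esymm {n : ℕ} (θ : Fin n → ℝ) (s : Finset (Fin n)) (k : ℕ) :
    ∑ i ∈ s, θ i * ∑ t ∈ (s.erase i).powersetCard k, ∏ x ∈ t, θ x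
      = (k + 1 : ℝ) * ∑ u ∈ s.powersetCard (k+1), ∏ x ∈ u, θ x := by
  have hrhs : (k + 1 : ℝ) * ∑ u ∈ s.powersetCard (k+1), ∏ x ∈ u, θ x
      = ∑ u ∈ s.powersetCard (k+1), ∑ i ∈ u, ∏ x ∈ u, θ x := by
    rw [Finset.mul_sum]
    refine Finset.sum_congr rfl fun u hu => ?_
    rw [Finset.sum_const, nsmul_eq_mul, (Finset.mem_powersetCard.mp hu).2]
    push_cast; ring
  rw [hrhs]
  simp only [Finset.mul_sum]
  rw [Finset.sum_sigma', Finset.sum_sigma']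
  refine Finset.sum_nbij' (i := fun p => ⟨insert p.1 p.2, p.1⟩)
    (j := fun p => ⟨p.2, p.1.erase p.2⟩) ?_ ?_ ?_ ?_ ?_
  · rintro ⟨i, t⟩ hp
    simp only [Finset.mem_sigma, Finset.mem_powersetCard] at hp ⊢
    obtain ⟨hi, hts, htc⟩ := hp
    have hit : i ∉ t := fun h => (Finset.mem_erase.mp (hts h)).1 rfl
    exact ⟨⟨Finset.insert_subset hi (hts.trans (Finset.erase_subset _ _)),
      by rw [Finset.card_insert_of_notMem hit, htc]⟩, Finset.mem_insert_self _ _⟩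
  · rintro ⟨u, i⟩ hp
    simp only [Finset.mem_sigma, Finset.mem_powersetCard] at hp ⊢
    obtain ⟨⟨hus, huc⟩, hiu⟩ := hp
    refine ⟨hus hiu, fun x hx => Finset.mem_erase.mpr
      ⟨(Finset.mem_erase.mp hx).1, hus (Finset.erase_subset _ _ hx)⟩, ?_⟩
    rw [Finset.card_erase_of_mem hiu, huc]; omega
  · rintro ⟨i, t⟩ hp
    simp only [Finset.mem_sigma, Finset.mem_powersetCard] at hp
    obtain ⟨hi, hts, htc⟩ := hp
    have hit : i ∉ t := fun h => (Finset.mem_erase.mp (hts h)).1 rfl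
    simp [Finset.erase_insert hit]
  · rintro ⟨u, i⟩ hp
    simp only [Finset.mem_sigma, Finset.mem_powersetCard] at hp
    simp [Finset.insert_erase hp.2]
  · rintro ⟨i, t⟩ hp
    simp only [Finset.mem_sigma, Finset.mem_powersetCard] at hp
    obtain ⟨hi, hts, htc⟩ := hp
    have hit : i ∉ t := fun h => (Finset.mem_erase.mp (hts h)).1 rfl
    simp [Finset.prod_insert hit]

lemma injQ {n : ℕ} (θ : Fin n → ℝ) :
    ∀ (k : ℕ) (s : Finset (Fin n)),
      ∑ a : Fin k → Fin n, (if Function.Injective a ∧ ∀ j, a j ∈ s then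
        ∏ j : Fin k, θ (a j) else 0)
      = (k.factorial : ℝ) * ∑ t ∈ s.powersetCard k, ∏ i ∈ t, θ i := by
  intro k
  induction k with
  | zero => intro s; simp [Function.injective_of_subsingleton]
  | succ k ih =>
      intro s
      rw [← Equiv.sum_comp (Fin.consEquiv (fun _ : Fin (k+1) => Fin n)), Fintype.sum_prod_type]
      have key : ∀ i : Fin n, ∑ b : Fin k → Fin n,
          (if Function.Injective (Fin.cons i b : Fin (k+1) → Fin n) ∧
              (∀ j, (Fin.cons i b : Fin (k+1) → Fin n) j ∈ s) then
            ∏ j : Fin (k+1), θ ((Fin.cons i b : Fin (k+1) → Fin n) j) else 0)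
          = if i ∈ s then θ i * ((k.factorial : ℝ) *
              ∑ t ∈ (s.erase i).powersetCard k, ∏ x ∈ t, θ x) else 0 := by
        intro i
        by_cases hi : i ∈ s
        · rw [if_pos hi, ← ih (s.erase i), Finset.mul_sum]
          refine Finset.sum_congr rfl fun b _ => ?_
          have hcond : (Function.Injective (Fin.cons i b : Fin (k+1) → Fin n) ∧
              (∀ j, (Fin.cons i b : Fin (k+1) → Fin n) j ∈ s)) ↔
              (Function.Injective b ∧ ∀ j, b j ∈ s.erase i) := by
            rw [Fin.cons_injective_iff, Fin.forall_fin_succ]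
            simp only [Fin.cons_zero, Fin.cons_succ, Finset.mem_erase]
            constructor
            · rintro ⟨⟨hr, hinj⟩, _, hmem⟩
              exact ⟨hinj, fun j => ⟨fun h => hr ⟨j, h⟩, hmem j⟩⟩
            · rintro ⟨hinj, hmem⟩
              exact ⟨⟨fun ⟨j, hj⟩ => (hmem j).1 hj, hinj⟩, hi, fun j => (hmem j).2⟩
          simp only [hcond]
          by_cases hb : Function.Injective b ∧ ∀ j, b j ∈ s.erase i
          · rw [if_pos hb, if_pos hb, Fin.prod_univ_succ, Fin.cons_zero]
            simp [Fin.cons_succ]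
          · rw [if_neg hb, if_neg hb, mul_zero]
        · rw [if_neg hi]
          refine Finset.sum_eq_zero fun b _ => ?_
          rw [if_neg]
          rintro ⟨-, hmem⟩
          exact hi (by simpa using hmem 0)
      calc ∑ i : Fin n, ∑ b : Fin k → Fin n, _
          = ∑ i : Fin n, if i ∈ s then θ i * ((k.factorial : ℝ) *
              ∑ t ∈ (s.erase i).powersetCard k, ∏ x ∈ t, θ x) else 0 :=
            Finset.sum_congr rfl fun i _ => key i
        _ = ∑ i ∈ s, θ i * ((k.factorial : ℝ) *
              ∑ t ∈ (s.erase i).powersetCard k, ∏ x ∈ t, θ x) := by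
            rw [Finset.sum_ite_mem, Finset.univ_inter]
        _ = (k.factorial : ℝ) * ∑ i ∈ s, θ i *
              ∑ t ∈ (s.erase i).powersetCard k, ∏ x ∈ t, θ x := by
            rw [Finset.mul_sum]; refine Finset.sum_congr rfl fun i _ => by ring
        _ = ((k+1).factorial : ℝ) * ∑ t ∈ s.powersetCard (k+1), ∏ x ∈ t, θ x := by
            rw [erase_esymm]
            rw [Nat.factorial_succ]
            push_cast; ring

/-- total variation between the Luce top-`k` distribution `P` and the
i.i.d. product `Q` equals the `Q`-probability that the `k` coordinates are not all
distinct, i.e. `‖P - Q‖_TV = 1 - k! e_k(θ)`. -/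
theorem tv_eq_one_sub_esymm (n k : ℕ) (hk : k ≤ n) (θ : Fin n → ℝ)
    (hpos : ∀ i, 0 < θ i) (hsum : ∑ i : Fin n, θ i = 1)
    (P Q : (Fin k → Fin n) → ℝ)
    (hP : ∀ a, P a = if Function.Injective a then
      ∏ j : Fin k, θ (a j) / (1 - ∑ l : Fin k, if l < j then θ (a l) else 0) else 0)
    (hQ : ∀ a, Q a = ∏ j : Fin k, θ (a j)) :
    (1 / 2) * ∑ a : Fin k → Fin n, |P a - Q a|
      = 1 - (k.factorial : ℝ) * ∑ s ∈ Finset.univ.powersetCard k, ∏ i ∈ s, θ i := by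
  have hsumu : ∑ i ∈ (Finset.univ : Finset (Fin n)), θ i = 1 := hsum
  -- sum of P is 1
  have hPsum : ∑ a : Fin k → Fin n, P a = 1 := by
    have h := luce_sum θ hpos k Finset.univ (by simpa using hk)
    rw [← h]
    refine Finset.sum_congr rfl fun a _ => ?_
    rw [hP a]
    by_cases ha : Function.Injective a
    · rw [if_pos ha, if_pos ⟨ha, fun j => Finset.mem_univ _⟩, hsumu]
    · rw [if_neg ha, if_neg (by tauto)]
  -- sum of Q is 1
  have hQsum : ∑ a : Fin k → Fin n, Q a = 1 := by
    simp_rw [hQ]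
    rw [← Fintype.sum_pow, hsum, one_pow]
  -- Q-mass of injective tuples
  have hS : ∑ a : Fin k → Fin n, (if Function.Injective a then Q a else 0)
      = (k.factorial : ℝ) * ∑ s ∈ Finset.univ.powersetCard k, ∏ i ∈ s, θ i := by
    rw [← injQ θ k Finset.univ]
    refine Finset.sum_congr rfl fun a _ => ?_
    by_cases ha : Function.Injective a
    · rw [if_pos ha, if_pos ⟨ha, fun j => Finset.mem_univ _⟩, hQ]
    · rw [if_neg ha, if_neg (by tauto)]
  set S := ∑ a : Fin k → Fin n, (if Function.Injective a then Q a else 0) with hSdef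
  -- Q is nonneg
  have hQ0 : ∀ a, 0 ≤ Q a := fun a => by
    rw [hQ]; exact Finset.prod_nonneg fun j _ => (hpos _).le
  -- P dominates Q on injective tuples
  have hPQ : ∀ a : Fin k → Fin n, Function.Injective a → Q a ≤ P a := by
    intro a ha
    rw [hP, if_pos ha, hQ]
    refine Finset.prod_le_prod (fun j _ => (hpos _).le) fun j _ => ?_
    have hpref0 : 0 ≤ ∑ l : Fin k, (if l < j then θ (a l) else 0) :=
      Finset.sum_nonneg fun l _ => by split_ifs; exacts [(hpos _).le, le_rfl]
    have hpref1 : (∑ l : Fin k, if l < j then θ (a l) else 0) < 1 := by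
      have h1 : (∑ l : Fin k, if l < j then θ (a l) else 0)
          = ∑ i ∈ (Finset.univ.filter (· < j)).image a, θ i := by
        rw [Finset.sum_image (fun x _ y _ h => ha h), Finset.sum_filter]
      rw [h1, ← hsumu]
      refine Finset.sum_lt_sum_of_subset (Finset.subset_univ _) (Finset.mem_univ (a j))
        ?_ (hpos _) fun x _ _ => (hpos _).le
      intro hmem
      obtain ⟨l, hl, hla⟩ := Finset.mem_image.mp hmem
      exact absurd (ha hla) (ne_of_lt (Finset.mem_filter.mp hl).2)
    have hd : 0 < 1 - ∑ l : Fin k, (if l < j then θ (a l) else 0) := by linarith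
    rw [le_div_iff₀ hd]
    nlinarith [(hpos (a j)).le]
  have habs : ∀ a : Fin k → Fin n, |P a - Q a|
      = P a + Q a - 2 * (if Function.Injective a then Q a else 0) := by
    intro a
    by_cases ha : Function.Injective a
    · rw [if_pos ha, abs_of_nonneg (sub_nonneg.mpr (hPQ a ha))]; ring
    · rw [if_neg ha, hP, if_neg ha, zero_sub, abs_neg, abs_of_nonneg (hQ0 a)]; ring
  calc (1 / 2 : ℝ) * ∑ a : Fin k → Fin n, |P a - Q a|
      = (1 / 2) * ∑ a : Fin k → Fin n,
          (P a + Q a - 2 * (if Function.Injective a then Q a else 0)) := by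
        rw [Finset.sum_congr rfl fun a _ => habs a]
    _ = (1 / 2) * ((∑ a : Fin k → Fin n, P a) + (∑ a : Fin k → Fin n, Q a) - 2 * S) := by
        rw [Finset.sum_sub_distrib, Finset.sum_add_distrib, ← Finset.mul_sum]
    _ = 1 - (k.factorial : ℝ) * ∑ s ∈ Finset.univ.powersetCard k, ∏ i ∈ s, θ i := by
        rw [hPsum, hQsum, hS]; ring
end

section
/- Let $0 < \theta_1 \leq \theta_2 \leq \cdots$ be a nondecreasing sequence, and let $X_1, X_2, \dots$ be independent exponentials with $X_i$ of rate $\theta_i$. For $n \geq \max_j a_j$ and distinct positive integers $a_1,\dots,a_k \leq n$, let $E_n$ be the event that $X_{a_1} > X_{a_2} > \cdots > X_{a_k} > X_i$ for all $i \in [n] \setminus \{a_1,\dots,a_k\}$. Then $\lim_{n\to\infty} P(E_n) = \int_{x_1 > x_2 > \cdots > x_k > 0} \prod_{j=1}^k \theta_{a_j}e^{-\theta_{a_j}x_j} \prod_{i \notin \{a_1,\dots,a_k\}} (1 - e^{-\theta_i x_k})\, dx_1\cdots dx_k$. -/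
/-!
Condition on the values `x` of `X (a 0), …, X (a (k - 1))`. The remaining `X i` with `i < n`
are independent of them, and each falls below `x (k - 1)` with probability
`1 - exp (-θ i * x (k - 1))`; hence `P(E_n)` is the integral of the finite product of these
factors against the product of the exponential laws of the `X (a j)`, over the decreasing tuples.
That product law has Lebesgue density `∏ j, θ (a j) * exp (-θ (a j) * x j)` on the positive
orthant, and the positivity of `x (k - 1)` costs nothing since exponential variables are
almost surely positive. The finite products take values in `[0, 1]` and converge to the infinite
one, so dominated convergence with respect to this finite measure gives the limit.
-/

open MeasureTheory ProbabilityTheory Filter Finset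
open scoped ENNReal Topology

theorem measurableSet_setOf_strictAnti {n : ℕ} :
    MeasurableSet {x : Fin n → ℝ | StrictAnti x} := by
  simp only [StrictAnti, Set.ofPred_forall]
  exact .iInter fun p => .iInter fun q => .iInter fun hpq =>
    measurableSet_lt (measurable_pi_apply q) (measurable_pi_apply p)

theorem Real.multipliable_of_nonneg_of_le_one {ι : Type*} {f : ι → ℝ} (h0 : ∀ i, 0 ≤ f i)
    (h1 : ∀ i, f i ≤ 1) : Multipliable f := by
  classical
  refine ⟨⨅ s : Finset ι, ∏ i ∈ s, f i, tendsto_atTop_ciInf (fun s t hst => ?_)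
    ⟨0, fun _ ⟨s, hs⟩ => hs ▸ Finset.prod_nonneg fun i _ => h0 i⟩⟩
  rw [← Finset.prod_sdiff hst]
  exact mul_le_of_le_one_left (Finset.prod_nonneg fun i _ => h0 i)
    (Finset.prod_le_one (fun i _ => h0 i) fun i _ => h1 i)

theorem one_sub_exp_neg_mul_mem_Icc {r c : ℝ} (hr : 0 < r) (hc : 0 ≤ c) :
    1 - Real.exp (-r * c) ∈ Set.Icc 0 1 := by
  rw [Set.mem_Icc, sub_nonneg, Real.exp_le_one_iff, sub_le_self_iff]
  exact ⟨by nlinarith, (Real.exp_pos _).le⟩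

namespace MeasureTheory

theorem lintegral_fin_nat_prod_eq_prod {n : ℕ} {E : Fin n → Type*}
    [∀ i, MeasurableSpace (E i)] (μ : ∀ i, Measure (E i)) [∀ i, SigmaFinite (μ i)]
    {f : ∀ i, E i → ℝ≥0∞} (hf : ∀ i, Measurable (f i)) :
    ∫⁻ x, ∏ i, f i (x i) ∂Measure.pi μ = ∏ i, ∫⁻ x, f i x ∂μ i := by
  induction n with
  | zero => simp
  | succ n ih =>
    rw [← ((measurePreserving_piFinSuccAbove μ 0).symm).lintegral_comp_emb
      (MeasurableEquiv.measurableEmbedding _)]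
    simp only [MeasurableEquiv.piFinSuccAbove_symm_apply, Fin.insertNthEquiv_apply,
      Fin.prod_univ_succAbove _ 0, Fin.insertNth_apply_same, Fin.insertNth_apply_succAbove]
    rw [lintegral_prod_mul (f := f 0)
      (g := fun y : ∀ j, E (Fin.succAbove 0 j) => ∏ i, f (Fin.succAbove 0 i) (y i))
      (hf 0).aemeasurable
      (Finset.measurable_prod _ fun i _ => (hf _).comp (measurable_pi_apply i)).aemeasurable,
      ih _ fun i => hf _]

theorem Measure.pi_withDensity {n : ℕ} {E : Fin n → Type*}
    [∀ i, MeasurableSpace (E i)] (μ : ∀ i, Measure (E i)) [∀ i, SigmaFinite (μ i)]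
    {f : ∀ i, E i → ℝ≥0∞} (hf : ∀ i, Measurable (f i))
    [∀ i, SigmaFinite ((μ i).withDensity (f i))] :
    Measure.pi (fun i => (μ i).withDensity (f i))
      = (Measure.pi μ).withDensity (fun x => ∏ i, f i (x i)) := by
  refine Measure.pi_eq fun s hs => ?_
  have hbox : (Set.univ.pi s).indicator (fun x => ∏ i, f i (x i))
      = fun x => ∏ i, (s i).indicator (f i) (x i) := by
    funext x
    by_cases hx : ∀ i, x i ∈ s i
    · rw [Set.indicator_of_mem (Set.mem_univ_pi.2 hx)]
      exact Finset.prod_congr rfl fun i _ => (Set.indicator_of_mem (hx i) _).symm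
    · obtain ⟨i, hi⟩ := not_forall.1 hx
      rw [Set.indicator_of_notMem (mt Set.mem_univ_pi.1 hx)]
      exact (Finset.prod_eq_zero (Finset.mem_univ i) (Set.indicator_of_notMem hi _)).symm
  rw [withDensity_apply _ (.univ_pi hs), ← lintegral_indicator (.univ_pi hs), hbox,
    lintegral_fin_nat_prod_eq_prod μ fun i => (hf i).indicator (hs i)]
  simp only [lintegral_indicator (hs _), withDensity_apply _ (hs _)]

theorem measurableSet_setOf_fst_mem_and_forall_lt {α κ : Type*} [MeasurableSpace α]
    [Countable κ] {B : Set α} (hB : MeasurableSet B) {g : α → ℝ} (hg : Measurable g) :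
    MeasurableSet {p : α × (κ → ℝ) | p.1 ∈ B ∧ ∀ i, p.2 i < g p.1} := by
  simp only [Set.ofPred_and, Set.ofPred_forall]
  exact (hB.preimage measurable_fst).inter
    (.iInter fun i => measurableSet_lt (measurable_snd.eval) (hg.comp measurable_fst))

theorem Measure.prod_pi_setOf_mem_and_forall_lt {α κ : Type*}
    [MeasurableSpace α] [Fintype κ] (ν : Measure α) [SFinite ν] (μ : κ → Measure ℝ)
    [∀ i, SigmaFinite (μ i)] {B : Set α} (hB : MeasurableSet B) {g : α → ℝ} (hg : Measurable g) :
    (ν.prod (Measure.pi μ)) {p | p.1 ∈ B ∧ ∀ i, p.2 i < g p.1}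
      = ∫⁻ x in B, ∏ i, μ i (Set.Iio (g x)) ∂ν := by
  rw [Measure.prod_apply (measurableSet_setOf_fst_mem_and_forall_lt hB hg),
    ← lintegral_indicator hB]
  refine lintegral_congr fun x => ?_
  by_cases hx : x ∈ B
  · simp only [Set.indicator_of_mem hx, ← Measure.pi_pi]
    congr 1
    ext y
    simp [hx]
  · simp [hx]

theorem tendsto_integral_prod_range_tprod {α : Type*} [MeasurableSpace α]
    {μ : Measure α} [IsFiniteMeasure μ] {F : ℕ → α → ℝ} (hF : ∀ i, Measurable (F i))
    (hF_mem : ∀ᵐ x ∂μ, ∀ i, F i x ∈ Set.Icc 0 1) :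
    Tendsto (fun n => ∫ x, ∏ i ∈ range n, F i x ∂μ) atTop (𝓝 (∫ x, ∏' i, F i x ∂μ)) := by
  refine tendsto_integral_of_dominated_convergence (fun _ => 1)
    (fun n => (Finset.measurable_prod _ fun i _ => hF i).aestronglyMeasurable)
    (integrable_const 1) (fun n => ?_) ?_
  · filter_upwards [hF_mem] with x hx
    rw [Real.norm_of_nonneg (Finset.prod_nonneg fun i _ => (hx i).1)]
    exact Finset.prod_le_one (fun i _ => (hx i).1) fun i _ => (hx i).2
  · filter_upwards [hF_mem] with x hx
    exact (Real.multipliable_of_nonneg_of_le_one (fun i => (hx i).1)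
      fun i => (hx i).2).hasProd.tendsto_prod_nat

end MeasureTheory

namespace ProbabilityTheory

theorem iIndepFun.map_prodMk_eq_prod_pi {Ω ι κ κ' β : Type*}
    [MeasurableSpace Ω] [MeasurableSpace β] {P : Measure Ω} [IsProbabilityMeasure P]
    {X : ι → Ω → β} (hindep : iIndepFun X P) (hmeas : ∀ i, Measurable (X i))
    [Fintype κ] [Fintype κ'] {a : κ → ι} {b : κ' → ι} (hab : Function.Injective (Sum.elim a b)) :
    P.map (fun ω => ((fun j => X (a j) ω), fun j => X (b j) ω))
      = (Measure.pi fun j => P.map (X (a j))).prod (Measure.pi fun j => P.map (X (b j))) := by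
  have hjoint := (hindep.precomp hab).map_fun_eq_pi_map fun i => (hmeas _).aemeasurable
  have hsplit := (measurePreserving_sumPiEquivProdPi
    fun i => P.map (X (Sum.elim a b i))).map_eq
  rw [← hjoint, Measure.map_map (MeasurableEquiv.measurable _)
    (measurable_pi_lambda _ fun i => hmeas _)] at hsplit
  exact hsplit

theorem iIndepFun.measure_mem_and_forall_lt {Ω ι κ κ' : Type*}
    [MeasurableSpace Ω] {P : Measure Ω} [IsProbabilityMeasure P]
    {X : ι → Ω → ℝ} (hindep : iIndepFun X P) (hmeas : ∀ i, Measurable (X i))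
    [Fintype κ] [Fintype κ'] {a : κ → ι} {b : κ' → ι} (hab : Function.Injective (Sum.elim a b))
    {B : Set (κ → ℝ)} (hB : MeasurableSet B) (j₀ : κ) :
    P {ω | (fun j => X (a j) ω) ∈ B ∧ ∀ j, X (b j) ω < X (a j₀) ω}
      = ∫⁻ x in B, ∏ j, P.map (X (b j)) (Set.Iio (x j₀))
          ∂Measure.pi fun j => P.map (X (a j)) := by
  have hpair : Measurable fun ω => ((fun j => X (a j) ω), fun j => X (b j) ω) :=
    (measurable_pi_lambda _ fun j => hmeas _).prodMk (measurable_pi_lambda _ fun j => hmeas _)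
  rw [← Measure.prod_pi_setOf_mem_and_forall_lt _ _ hB (measurable_pi_apply j₀),
    ← hindep.map_prodMk_eq_prod_pi hmeas hab,
    Measure.map_apply hpair (measurableSet_setOf_fst_mem_and_forall_lt hB (measurable_pi_apply j₀))]
  rfl

theorem expMeasure_eq_withDensity (r : ℝ) :
    expMeasure r = volume.withDensity (exponentialPDF r) := rfl

theorem measurable_exponentialPDF (r : ℝ) : Measurable (exponentialPDF r) :=
  (measurable_exponentialPDFReal r).ennreal_ofReal

theorem expMeasure_Iio {r : ℝ} (hr : 0 < r) {c : ℝ} (hc : 0 ≤ c) :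
    expMeasure r (Set.Iio c) = ENNReal.ofReal (1 - Real.exp (-(r * c))) := by
  rw [expMeasure_eq_withDensity, withDensity_apply _ measurableSet_Iio,
    Measure.restrict_congr_set Iio_ae_eq_Iic, lintegral_exponentialPDF_eq_antiDeriv hr, if_pos hc]

theorem ae_expMeasure_pos {r : ℝ} (hr : 0 < r) : ∀ᵐ x ∂expMeasure r, 0 < x := by
  simp only [ae_iff, not_lt]
  change expMeasure r (Set.Iic 0) = 0
  rw [expMeasure_eq_withDensity, withDensity_apply _ measurableSet_Iic,
    lintegral_exponentialPDF_eq_antiDeriv hr]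
  simp

theorem pi_expMeasure_eq_withDensity {n : ℕ} {r : Fin n → ℝ} (hr : ∀ j, 0 < r j) :
    Measure.pi (fun j => expMeasure (r j))
      = volume.withDensity (fun x => ∏ j, exponentialPDF (r j) (x j)) := by
  have (j : Fin n) : IsProbabilityMeasure (volume.withDensity (exponentialPDF (r j))) :=
    isProbabilityMeasure_expMeasure (hr j)
  exact Measure.pi_withDensity (fun _ => volume) (f := fun j => exponentialPDF (r j))
    fun j => measurable_exponentialPDF (r j)

theorem setIntegral_pi_expMeasure {n : ℕ} {r : Fin n → ℝ} (hr : ∀ j, 0 < r j)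
    {R : Set (Fin n → ℝ)} (hR : MeasurableSet R) (hR_nonneg : ∀ x ∈ R, ∀ j, 0 ≤ x j)
    (G : (Fin n → ℝ) → ℝ) :
    ∫ x in R, G x ∂Measure.pi (fun j => expMeasure (r j))
      = ∫ x in R, (∏ j, r j * Real.exp (-(r j) * x j)) * G x := by
  have hdens : Measurable fun x : Fin n → ℝ => ∏ j, exponentialPDF (r j) (x j) :=
    Finset.measurable_prod _ fun j _ =>
      (measurable_exponentialPDF (r j)).comp (measurable_pi_apply j)
  rw [pi_expMeasure_eq_withDensity hr, setIntegral_withDensity_eq_setIntegral_toReal_smul hdens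
    (ae_of_all _ fun x => ENNReal.prod_lt_top fun j _ => ENNReal.ofReal_lt_top) G hR]
  refine setIntegral_congr_fun hR fun x hx => ?_
  simp only [ENNReal.toReal_prod, smul_eq_mul, exponentialPDF_of_nonneg (hR_nonneg x hx _),
    ENNReal.toReal_ofReal (mul_nonneg (hr _).le (Real.exp_pos _).le), neg_mul]

end ProbabilityTheory

theorem measure_strictAnti_and_forall_lt_eq_setLIntegral {θ : ℕ → ℝ} (hpos : ∀ i, 0 < θ i)
    {Ω : Type*} [MeasurableSpace Ω] {P : Measure Ω} [IsProbabilityMeasure P]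
    {X : ℕ → Ω → ℝ} (hmeas : ∀ i, Measurable (X i)) (hindep : iIndepFun X P)
    (hlaw : ∀ i, P.map (X i) = expMeasure (θ i))
    {k : ℕ} {a : Fin k → ℕ} (ha : Function.Injective a) (j₀ : Fin k) (n : ℕ) :
    P {ω | (∀ j₁ j₂ : Fin k, j₁ < j₂ → X (a j₂) ω < X (a j₁) ω) ∧
        ∀ i < n, i ∉ Finset.image a univ → X i ω < X (a j₀) ω}
      = ∫⁻ x in {x | StrictAnti x ∧ 0 < x j₀},
          ENNReal.ofReal (∏ i ∈ range n, if i ∈ Finset.image a univ then 1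
            else 1 - Real.exp (-(θ i) * x j₀)) ∂Measure.pi fun j => expMeasure (θ (a j)) := by
  classical
  have (i : ℕ) : IsProbabilityMeasure (expMeasure (θ i)) := isProbabilityMeasure_expMeasure (hpos i)
  set S := (range n).filter (· ∉ Finset.image a univ)
  have hab : Function.Injective (Sum.elim a ((↑) : S → ℕ)) :=
    ha.sumElim Subtype.val_injective fun j i h =>
      (mem_filter.1 i.2).2 (h ▸ mem_image_of_mem a (mem_univ j))
  have hae : {x : Fin k → ℝ | StrictAnti x}
      =ᵐ[Measure.pi fun j => expMeasure (θ (a j))] {x | StrictAnti x ∧ 0 < x j₀} := by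
    filter_upwards [Measure.tendsto_eval_ae_ae.eventually (ae_expMeasure_pos (hpos (a j₀)))]
      with x hx
    exact propext (and_iff_left hx).symm
  trans P {ω | (fun j => X (a j) ω) ∈ {x | StrictAnti x} ∧ ∀ i : S, X i ω < X (a j₀) ω}
  · congr 1
    ext ω
    simp [S, StrictAnti]
  rw [hindep.measure_mem_and_forall_lt hmeas hab measurableSet_setOf_strictAnti j₀]
  simp only [hlaw]
  rw [setLIntegral_congr hae]
  refine setLIntegral_congr_fun (measurableSet_setOf_strictAnti.inter
    (measurableSet_lt measurable_const (measurable_pi_apply j₀))) fun x hx => ?_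
  rw [Finset.prod_coe_sort S fun i => expMeasure (θ i) (Set.Iio (x j₀)), Finset.prod_filter,
    ENNReal.ofReal_prod_of_nonneg fun i _ => by
      split_ifs
      exacts [zero_le_one, (one_sub_exp_neg_mul_mem_Icc (hpos i) hx.2.le).1]]
  refine Finset.prod_congr rfl fun i _ => ?_
  split_ifs
  · simp
  · rw [expMeasure_Iio (hpos i) hx.2.le, neg_mul]

/-- for independent exponentials `X i` of rate `θ i` (with `θ`
nondecreasing) and distinct indices `a 0, …, a (k-1)`, the probability that
`X (a 0) > X (a 1) > ⋯ > X (a (k-1)) > X i` for all other `i < n` converges, as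
`n → ∞`, to the stated integral. -/
theorem limit_prob_last_k (θ : ℕ → ℝ) (hpos : ∀ i, 0 < θ i)
    {Ω : Type*} [MeasurableSpace Ω] (P : Measure Ω) [IsProbabilityMeasure P]
    (X : ℕ → Ω → ℝ) (hmeas : ∀ i, Measurable (X i))
    (hindep : iIndepFun X P)
    (hlaw : ∀ i, Measure.map (X i) P = expMeasure (θ i))
    (k : ℕ) (hk : 0 < k) (a : Fin k → ℕ) (ha : Function.Injective a) :
    Tendsto (fun n : ℕ =>
        (P {ω | (∀ j₁ j₂ : Fin k, j₁ < j₂ → X (a j₂) ω < X (a j₁) ω) ∧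
            ∀ i < n, i ∉ Finset.image a Finset.univ →
              X i ω < X (a ⟨k - 1, by omega⟩) ω}).toReal)
      atTop
      (nhds (∫ x : Fin k → ℝ in
          {x | StrictAnti x ∧ 0 < x ⟨k - 1, by omega⟩},
        (∏ j : Fin k, θ (a j) * Real.exp (-(θ (a j)) * x j)) *
          ∏' i : ℕ, if i ∈ Finset.image a Finset.univ then 1
            else 1 - Real.exp (-(θ i) * x ⟨k - 1, by omega⟩))) := by
  have (i : ℕ) : IsProbabilityMeasure (expMeasure (θ i)) := isProbabilityMeasure_expMeasure (hpos i)
  set last : Fin k := ⟨k - 1, by omega⟩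
  set R := {x : Fin k → ℝ | StrictAnti x ∧ 0 < x last}
  set F : ℕ → (Fin k → ℝ) → ℝ :=
    fun i x => if i ∈ Finset.image a univ then 1 else 1 - Real.exp (-(θ i) * x last)
  have hR : MeasurableSet R :=
    measurableSet_setOf_strictAnti.inter (measurableSet_lt measurable_const (measurable_pi_apply _))
  have hR_pos (x) (hx : x ∈ R) (j : Fin k) : 0 < x j :=
    hx.2.trans_le (hx.1.antitone (Fin.le_def.2 (by simp [last]; omega)))
  have hF_mem : ∀ x ∈ R, ∀ i, F i x ∈ Set.Icc 0 1 := by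
    intro x hx i
    simp only [F]
    split_ifs
    exacts [⟨zero_le_one, le_rfl⟩, one_sub_exp_neg_mul_mem_Icc (hpos i) (hR_pos x hx last).le]
  have hF (i : ℕ) : Measurable (F i) := by
    simp only [F]
    split_ifs <;> fun_prop
  rw [← setIntegral_pi_expMeasure (fun j => hpos (a j)) hR fun x hx j => (hR_pos x hx j).le]
  refine (tendsto_integral_prod_range_tprod hF (ae_restrict_of_forall_mem hR hF_mem)).congr
    fun n => ?_
  rw [measure_strictAnti_and_forall_lt_eq_setLIntegral hpos hmeas hindep hlaw ha last n,
    integral_eq_lintegral_of_nonneg_ae]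
  · filter_upwards [ae_restrict_mem hR] with x hx
    exact Finset.prod_nonneg fun i _ => (hF_mem x hx i).1
  · exact (Finset.measurable_prod _ fun i _ => hF i).aestronglyMeasurable
end
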